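/- arXiv:2102.05337 — 9 statements merged into one kernel-verified Lean document; each statement's English description precedes it below -/
import Mathlib

section
/- For all real t with 0 < t < 1/√5, the three polynomials F(t) = (1 − t√5)(1 + t/√5)^5, E(t) = (1 − t√2)²(1 + t/√2)^4, and G(t) = (1 − t)³(1 + t)³ satisfy F(t) < E(t) < G(t). -/
set_option maxHeartbeats 1600000 in
lemma stmt_3_aux (t a b : ℝ) (ht0 : 0 < t) (ha : a ^ 2 = 5) (hb : b ^ 2 = 2)
    (ha0 : 0 < a) (hb0 : 0 < b) (hta : t * a < 1) :
    (1 - t * a) * (1 + t * a / 5) ^ 5 < (1 - t * b) ^ 2 * (1 + t * b / 2) ^ 4 ∧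
    (1 - t * b) ^ 2 * (1 + t * b / 2) ^ 4 < (1 - t) ^ 3 * (1 + t) ^ 3 := by
  have ha2 : 2 < a := by nlinarith
  have hb1 : 1 < b := by nlinarith
  have hb2 : b < 3 / 2 := by nlinarith
  have ht : t < 1 / 2 := by nlinarith
  have key1 : (1 - t * b) ^ 2 * (1 + t * b / 2) ^ 4
      - (1 - t * a) * (1 + t * a / 5) ^ 5
      = (8/5 * a - b) * t^3 + 81/20 * t^4 + (3/2 * b + 24/125 * a) * t^5
        + 27/50 * t^6 := by
    linear_combination
      ((3/5) * t^2 + (9/25) * t^4 + (1/125) * t^6 + (8/25) * a * t^3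
        + (24/625) * a * t^5 + (9/125) * a^2 * t^4 + (1/625) * a^2 * t^6
        + (24/3125) * a^3 * t^5 + (1/3125) * a^4 * t^6) * ha
      + ((-3/2) * t^2 + (9/8) * t^4 + (1/4) * t^6 + (-1/2) * b * t^3
        + (3/4) * b * t^5 + (9/16) * b^2 * t^4 + (1/8) * b^2 * t^6
        + (3/8) * b^3 * t^5 + (1/16) * b^4 * t^6) * hb
  have key2 : (1 - t) ^ 3 * (1 + t) ^ 3
      - (1 - t * b) ^ 2 * (1 + t * b / 2) ^ 4
      = b * t^3 + 3/4 * t^4 - 3/2 * b * t^5 - 3/2 * t^6 := by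
    linear_combination
      ((3/2) * t^2 + (-9/8) * t^4 + (-1/4) * t^6 + (1/2) * b * t^3
        + (-3/4) * b * t^5 + (-9/16) * b^2 * t^4 + (-1/8) * b^2 * t^6
        + (-3/8) * b^3 * t^5 + (-1/16) * b^4 * t^6) * hb
  have ht3 : 0 < t^3 := by positivity
  have ht4 : 0 < t^4 := by positivity
  have ht5 : 0 < t^5 := by positivity
  have ht6 : 0 < t^6 := by positivity
  have hts : t^2 < 1/4 := by nlinarith
  constructor
  · have c1 : 0 < (8/5 * a - b) * t^3 := mul_pos (by nlinarith) ht3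
    have c3 : 0 < (3/2 * b + 24/125 * a) * t^5 := mul_pos (by nlinarith) ht5
    linarith [key1, c1, c3, ht4, ht6]
  · have h1 : 0 < b * t^3 - 3/2 * b * t^5 := by
      have p1 : (0:ℝ) < 1 - 3/2 * t^2 := by linarith
      have p2 := mul_pos (mul_pos hb0 ht3) p1
      have p3 : b * t^3 * (1 - 3/2 * t^2) = b * t^3 - 3/2 * b * t^5 := by ring
      linarith [p2, p3.ge, p3.le]
    have h2 : 0 < 3/4 * t^4 - 3/2 * t^6 := by
      have p1 : (0:ℝ) < 1 - 2 * t^2 := by linarith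
      have p2 := mul_pos ht4 p1
      have p3 : t^4 * (1 - 2 * t^2) * (3/4) = 3/4 * t^4 - 3/2 * t^6 := by ring
      linarith [p2, p3.ge, p3.le]
    linarith [key2, h1, h2]

theorem stmt_3 (t : ℝ) (ht0 : 0 < t) (ht1 : t < 1 / Real.sqrt 5) :
    (1 - t * Real.sqrt 5) * (1 + t / Real.sqrt 5) ^ 5
      < (1 - t * Real.sqrt 2) ^ 2 * (1 + t / Real.sqrt 2) ^ 4 ∧
    (1 - t * Real.sqrt 2) ^ 2 * (1 + t / Real.sqrt 2) ^ 4
      < (1 - t) ^ 3 * (1 + t) ^ 3 := by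
  have ha : Real.sqrt 5 ^ 2 = 5 := Real.sq_sqrt (by norm_num)
  have hb : Real.sqrt 2 ^ 2 = 2 := Real.sq_sqrt (by norm_num)
  have ha0 : 0 < Real.sqrt 5 := Real.sqrt_pos.mpr (by norm_num)
  have hb0 : 0 < Real.sqrt 2 := Real.sqrt_pos.mpr (by norm_num)
  have hta : t * Real.sqrt 5 < 1 := (lt_div_iff₀ ha0).mp ht1
  have e5 : t / Real.sqrt 5 = t * Real.sqrt 5 / 5 := by
    rw [div_eq_div_iff ha0.ne' (by norm_num : (5:ℝ) ≠ 0)]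
    linear_combination (-t) * ha
  have e2 : t / Real.sqrt 2 = t * Real.sqrt 2 / 2 := by
    rw [div_eq_div_iff hb0.ne' (by norm_num : (2:ℝ) ≠ 0)]
    linear_combination (-t) * hb
  rw [e5, e2]
  exact stmt_3_aux t _ _ ht0 ha hb ha0 hb0 hta
end

section
/- Define g(a,b) = ((1 − √3 a t)² − b² t²)(1 + √3 a t + (3a² + (3/2)b² − 3/2) t²)² on the domain D = {(a,b) ∈ ℝ² : 3a² + 2b² ≤ 2}. Then for every t with 0 < t < 2√2/7, the minimum of g over D equals E(t) = (1 − √2 t)²(1 + t/√2)^4, attained at (a,b) = (√(2/3), 0). -/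
set_option maxHeartbeats 1000000


lemma lemBr (r u : ℝ) (h1 : 0 ≤ r + u) (h2 : 0 ≤ r - u) (h3 : 0 < r) (h4 : r < 4/7) :
    0 ≤ (3*(r+u)+r^2+r*u+u^2)*((1-(3/4)*u^2-u^3/4)+(1-(3/4)*r^2-r^3/4))/4
      - (r+u)/2*(1+u/2)^4 := by
  nlinarith [mul_nonneg h1 h2, mul_nonneg (mul_nonneg h1 h2) (sub_nonneg.2 h4.le),
    mul_nonneg h1 (sub_nonneg.2 h4.le), mul_nonneg h2 (sub_nonneg.2 h4.le),
    sq_nonneg (r-u), sq_nonneg (r+u), sq_nonneg u, mul_pos h3 h3,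
    mul_nonneg (mul_nonneg h1 h1) h2, mul_nonneg (mul_nonneg h2 h2) h1,
    mul_nonneg (mul_nonneg h1 h1) h1, mul_nonneg (mul_nonneg h2 h2) h2]

lemma lemB (r u : ℝ) (h1 : -r ≤ u) (h2 : u ≤ r) (h3 : 0 < r) (h4 : r < 4/7) :
    (1-r)^2*(1+r/2)^4 ≤ (3/2*u^2 - 2*u + 1 - r^2/2)*(1+u/2)^4 := by
  have hbr := lemBr r u (by linarith) (by linarith) h3 h4
  have key : (3/2*u^2 - 2*u + 1 - r^2/2)*(1+u/2)^4 - (1-r)^2*(1+r/2)^4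
      = (r-u)*((3*(r+u)+r^2+r*u+u^2)*((1-(3/4)*u^2-u^3/4)+(1-(3/4)*r^2-r^3/4))/4
      - (r+u)/2*(1+u/2)^4) := by ring
  nlinarith [mul_nonneg (sub_nonneg.2 h2) hbr]

lemma lemA (r u : ℝ) (h1 : -r ≤ u) (h2 : u ≤ r) (h3 : 0 < r) (h4 : r < 4/7) :
    (1-r)^2*(1+r/2)^4 ≤ (1-u)^2*(1+u+u^2-3/4*r^2)^2 := by
  have h0 : (0:ℝ) ≤ (1-r)*(1+r/2)^2 := by nlinarith [sq_nonneg (1+r/2)]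
  have hmono : (1-r)*(1+r/2)^2 ≤ (1-u)*(1+u+u^2-3/4*r^2) := by
    nlinarith [mul_nonneg (sub_nonneg.2 h2) (sq_nonneg (u+r/2))]
  have hsq := mul_self_le_mul_self h0 hmono
  nlinarith [hsq]

lemma key (r u s : ℝ) (hr0 : 0 < r) (hr1 : r < 4/7) (hs : 0 ≤ s) (hc : u^2+2*s ≤ r^2) :
    (1-r)^2*(1+r/2)^4 ≤ ((1-u)^2 - s)*((1+u+u^2-(3/4)*r^2)+(3/2)*s)^2 := by
  have hu2 : u^2 ≤ r^2 := by linarith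
  have h2u : u ≤ r := by nlinarith
  have h1u : -r ≤ u := by nlinarith
  have hP : 0 < 1+u+u^2-(3/4)*r^2 := by nlinarith
  have hsS : s ≤ (r^2-u^2)/2 := by linarith
  have hQS : (0:ℝ) ≤ 3/2*u^2 - 2*u + 1 - r^2/2 := by nlinarith
  rcases le_or_gt ((1+u+u^2-(3/4)*r^2) + (9/2)*s) (3*(1-u)^2) with hcase|hcase
  · have hA := lemA r u h1u h2u hr0 hr1
    have hstep : (1-u)^2*(1+u+u^2-(3/4)*r^2)^2
        ≤ ((1-u)^2 - s)*((1+u+u^2-(3/4)*r^2)+(3/2)*s)^2 := by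
      nlinarith [mul_nonneg (mul_nonneg hs hP.le)
          (show (0:ℝ) ≤ 3*(1-u)^2 - (1+u+u^2-(3/4)*r^2) - 3*s by linarith),
        mul_nonneg (mul_nonneg hs hs)
          (show (0:ℝ) ≤ (1-u)^2 - s by nlinarith)]
    linarith
  · have hB := lemB r u h1u h2u hr0 hr1
    have hh : (0:ℝ) ≤ (r^2-u^2)/2 - s := by linarith
    have hcase' : (0:ℝ) ≤ (1+u+u^2-(3/4)*r^2) + (9/2)*s - 3*(1-u)^2 := by linarith
    have hApos : (0:ℝ) ≤ (1+u+u^2-(3/4)*r^2) + (3/2)*s := by linarith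
    have h3A : (0:ℝ) ≤ 3*((1+u+u^2-(3/4)*r^2)+(3/2)*s)
        - (9/4)*(3/2*u^2 - 2*u + 1 - r^2/2) := by linarith
    have hid : ((1-u)^2 - s)*((1+u+u^2-(3/4)*r^2)+(3/2)*s)^2
        - (3/2*u^2 - 2*u + 1 - r^2/2)*(1+u/2)^4
        = ((r^2-u^2)/2 - s)*(((1+u+u^2-(3/4)*r^2)+(3/2)*s)
            *((1+u+u^2-(3/4)*r^2) + (9/2)*s - 3*(1-u)^2))
          + ((r^2-u^2)/2 - s)^2*(3*((1+u+u^2-(3/4)*r^2)+(3/2)*s)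
            - (9/4)*(3/2*u^2 - 2*u + 1 - r^2/2)) := by ring
    have hstep : (3/2*u^2 - 2*u + 1 - r^2/2)*(1+u/2)^4
        ≤ ((1-u)^2 - s)*((1+u+u^2-(3/4)*r^2)+(3/2)*s)^2 := by
      linarith [hid, mul_nonneg hh (mul_nonneg hApos hcase'),
        mul_nonneg (mul_nonneg hh hh) h3A]
    linarith


theorem stmt_4 (t : ℝ) (ht0 : 0 < t) (ht1 : t < 2 * Real.sqrt 2 / 7)
    (g : ℝ → ℝ → ℝ)
    (hg : ∀ a b : ℝ, g a b =
      ((1 - Real.sqrt 3 * a * t) ^ 2 - b ^ 2 * t ^ 2) *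
        (1 + Real.sqrt 3 * a * t + (3 * a ^ 2 + (3 / 2) * b ^ 2 - 3 / 2) * t ^ 2) ^ 2) :
    (∀ a b : ℝ, 3 * a ^ 2 + 2 * b ^ 2 ≤ 2 →
        (1 - Real.sqrt 2 * t) ^ 2 * (1 + t / Real.sqrt 2) ^ 4 ≤ g a b) ∧
      g (Real.sqrt (2 / 3)) 0
        = (1 - Real.sqrt 2 * t) ^ 2 * (1 + t / Real.sqrt 2) ^ 4 := by
  have s2 : (Real.sqrt 2) ^ 2 = 2 := Real.sq_sqrt (by norm_num)
  have s3 : (Real.sqrt 3) ^ 2 = 3 := Real.sq_sqrt (by norm_num)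
  have s2pos : 0 < Real.sqrt 2 := Real.sqrt_pos.2 (by norm_num)
  have hdiv : t / Real.sqrt 2 = Real.sqrt 2 * t / 2 := by
    rw [div_eq_div_iff (by positivity) (by norm_num : (2:ℝ) ≠ 0)]
    linear_combination (-t) * s2
  have hr0 : 0 < Real.sqrt 2 * t := mul_pos s2pos ht0
  have hr1 : Real.sqrt 2 * t < 4/7 := by
    have h := mul_lt_mul_of_pos_left ht1 s2pos
    nlinarith [h, s2]
  constructor
  · intro a b hab
    have h3a : (Real.sqrt 3 * a * t) ^ 2 = 3 * (a^2 * t^2) := by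
      rw [mul_pow, mul_pow, s3]; ring
    have h2t : (Real.sqrt 2 * t) ^ 2 = 2 * t^2 := by
      rw [mul_pow, s2]
    have hs : (0:ℝ) ≤ b^2 * t^2 := by positivity
    have hc : (Real.sqrt 3 * a * t)^2 + 2*(b^2*t^2) ≤ (Real.sqrt 2 * t)^2 := by
      rw [h3a, h2t]
      nlinarith [mul_le_mul_of_nonneg_right hab (sq_nonneg t)]
    have hk := key (Real.sqrt 2 * t) (Real.sqrt 3 * a * t) (b^2*t^2) hr0 hr1 hs hc
    rw [hg a b, hdiv]
    have efac : (3 * a ^ 2 + (3 / 2) * b ^ 2 - 3 / 2) * t ^ 2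
        = (Real.sqrt 3 * a * t)^2 + (3/2)*(b^2*t^2) - (3/4)*(Real.sqrt 2*t)^2 := by
      rw [h3a, h2t]; ring
    rw [efac]
    nlinarith [hk]
  · have hsq23 : Real.sqrt (2/3) ^ 2 = 2/3 := Real.sq_sqrt (by norm_num)
    have h32 : Real.sqrt 3 * Real.sqrt (2/3) = Real.sqrt 2 := by
      rw [← Real.sqrt_mul (by norm_num)]; norm_num
    have hpow : (1 + Real.sqrt 2 * t / 2)^4 = (1 + Real.sqrt 2 * t + t^2/2)^2 := by
      have h : (1 + Real.sqrt 2 * t / 2)^2 = 1 + Real.sqrt 2 * t + t^2/2 := by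
        linear_combination (t^2/4) * s2
      calc (1 + Real.sqrt 2 * t / 2)^4 = ((1 + Real.sqrt 2 * t / 2)^2)^2 := by ring
        _ = (1 + Real.sqrt 2 * t + t^2/2)^2 := by rw [h]
    rw [hg, h32, hdiv, hpow]
    rw [hsq23]
    ring
end

section
/- For 0 < t < 1/√5 and all (a,b) with 3a² + 2b² ≤ 2, the quadratic expression 1 + √3 a t + (3a² + (3/2)b² − 3/2)t² is strictly positive. -/
theorem stmt_5 (t a b : ℝ) (ht0 : 0 < t) (ht1 : t < 1 / Real.sqrt 5)
    (hab : 3 * a ^ 2 + 2 * b ^ 2 ≤ 2) :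
    0 < 1 + Real.sqrt 3 * a * t + (3 * a ^ 2 + (3 / 2) * b ^ 2 - 3 / 2) * t ^ 2 := by
  have h5 : Real.sqrt 5 > 0 := Real.sqrt_pos.mpr (by norm_num)
  have ht : t * Real.sqrt 5 < 1 := by
    rw [div_eq_inv_mul, mul_one] at ht1
    calc t * Real.sqrt 5 < (Real.sqrt 5)⁻¹ * Real.sqrt 5 := by
          exact mul_lt_mul_of_pos_right ht1 h5
      _ = 1 := inv_mul_cancel₀ (ne_of_gt h5)
  have h5sq : Real.sqrt 5 ^ 2 = 5 := Real.sq_sqrt (by norm_num)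
  have ht2 : 5 * t ^ 2 < 1 := by nlinarith
  have h3 : Real.sqrt 3 ^ 2 = 3 := Real.sq_sqrt (by norm_num)
  nlinarith [sq_nonneg (t * a + Real.sqrt 3 / 6), sq_nonneg (b * t), Real.sqrt_nonneg 3]
end

section
/- Let f(a) = −(1/288)(2√3 + 3at)^4(−2 + 4√3 at + 2t² − 9a²t²) on the interval a² ≤ 2/3. If 0 < t < 2√2/7, then f′(a) = (1/48)t²(2√3 + 3at)³(27ta² − 4√3 a − 4t) changes sign exactly once on [−√(2/3), √(2/3)], from positive to negative; consequently the minimum of f on [−√(2/3), √(2/3)] equals min{f(−√(2/3)), f(√(2/3))} = f(√(2/3)). -/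
set_option maxHeartbeats 1000000 in
theorem stmt_6 (t : ℝ) (ht0 : 0 < t) (ht1 : t < 2 * Real.sqrt 2 / 7)
    (f f' : ℝ → ℝ)
    (hf : ∀ a, f a = -(1 / 288) * (2 * Real.sqrt 3 + 3 * a * t) ^ 4 *
      (-2 + 4 * Real.sqrt 3 * a * t + 2 * t ^ 2 - 9 * a ^ 2 * t ^ 2))
    (hf' : ∀ a, f' a = (1 / 48) * t ^ 2 * (2 * Real.sqrt 3 + 3 * a * t) ^ 3 *
      (27 * t * a ^ 2 - 4 * Real.sqrt 3 * a - 4 * t))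
    (hderiv : ∀ a, HasDerivAt f (f' a) a) :
    ∃ c ∈ Set.Icc (-Real.sqrt (2 / 3)) (Real.sqrt (2 / 3)),
      (∀ a ∈ Set.Icc (-Real.sqrt (2 / 3)) (Real.sqrt (2 / 3)), a < c → 0 < f' a) ∧
      (∀ a ∈ Set.Icc (-Real.sqrt (2 / 3)) (Real.sqrt (2 / 3)), c < a → f' a < 0) ∧
      (∀ a ∈ Set.Icc (-Real.sqrt (2 / 3)) (Real.sqrt (2 / 3)),
        f (Real.sqrt (2 / 3)) ≤ f a) ∧
      f (Real.sqrt (2 / 3)) = min (f (-Real.sqrt (2 / 3))) (f (Real.sqrt (2 / 3))) := by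
  set s := Real.sqrt (2 / 3) with hs_def
  have hs0 : 0 < s := Real.sqrt_pos.mpr (by norm_num)
  have hs2 : s ^ 2 = 2 / 3 := Real.sq_sqrt (by norm_num)
  have h2sq : Real.sqrt 2 ^ 2 = 2 := Real.sq_sqrt (by norm_num)
  have h3sq : Real.sqrt 3 ^ 2 = 3 := Real.sq_sqrt (by norm_num)
  have h30 : (0:ℝ) < Real.sqrt 3 := Real.sqrt_pos.mpr (by norm_num)
  have h20 : (0:ℝ) < Real.sqrt 2 := Real.sqrt_pos.mpr (by norm_num)
  have h23 : Real.sqrt 3 * s = Real.sqrt 2 := by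
    rw [hs_def, ← Real.sqrt_mul (by norm_num)]; norm_num
  have ht7 : 7 * t < 2 * Real.sqrt 2 := by linarith
  have ht49 : 49 * t ^ 2 < 8 := by
    have h := pow_lt_pow_left₀ ht7 (by positivity) (n := 2) two_ne_zero
    nlinarith [h, h2sq]
  -- the critical point
  set r := Real.sqrt (3 + 27 * t ^ 2) with hr_def
  have hr0 : 0 < r := Real.sqrt_pos.mpr (by positivity)
  have hr2 : r ^ 2 = 3 + 27 * t ^ 2 := Real.sq_sqrt (by positivity)
  have hr3 : Real.sqrt 3 < r := by
    have : Real.sqrt 3 ^ 2 < r ^ 2 := by rw [h3sq, hr2]; nlinarith [sq_nonneg t, ht0]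
    exact lt_of_pow_lt_pow_left₀ 2 hr0.le this
  have h27 : (0:ℝ) < 27 * t := by linarith
  set c := (2 * Real.sqrt 3 - 2 * r) / (27 * t) with hc_def
  have hc_neg : c < 0 := div_neg_of_neg_of_pos (by linarith) h27
  have h27t : 27 * t * c = 2 * Real.sqrt 3 - 2 * r := by
    rw [hc_def, mul_div_cancel₀ _ (ne_of_gt h27)]
  have hqc : 27 * t * c ^ 2 - 4 * Real.sqrt 3 * c - 4 * t = 0 := by
    have haux : 27 * t * (27 * t * c ^ 2 - 4 * Real.sqrt 3 * c - 4 * t) = 0 := by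
      linear_combination (27*t*c - 2*Real.sqrt 3 - 2*r) * h27t + 4*hr2 - 4*h3sq
    rcases mul_eq_zero.mp haux with h | h
    · exact absurd h (ne_of_gt h27)
    · exact h
  have hcs : -s ≤ c := by
    have key : 2 * r ≤ 2 * Real.sqrt 3 + 27 * t * s := by
      have e4 : (2*Real.sqrt 3 + 27*t*s)^2 = 12 + 108*Real.sqrt 2*t + 486*t^2 := by
        linear_combination 4*h3sq + 729*t^2*hs2 + 108*t*h23
      have e5 : (2*r)^2 = 12 + 108*t^2 := by linear_combination 4*hr2
      have hsq : (2*r)^2 ≤ (2*Real.sqrt 3 + 27*t*s)^2 := by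
        rw [e4, e5]
        have := mul_pos h20 ht0
        nlinarith [sq_nonneg t]
      exact le_of_pow_le_pow_left₀ two_ne_zero (by positivity) hsq
    rw [hc_def, le_div_iff₀ h27]
    linarith [key]
  have hc_mem : c ∈ Set.Icc (-s) s := ⟨hcs, by linarith⟩
  -- positivity of 2√3 + 3at on the interval
  have hbpos : ∀ a ∈ Set.Icc (-s) s, 0 < 2 * Real.sqrt 3 + 3 * a * t := by
    intro a ha
    have h1 : -s ≤ a := ha.1
    have hst : 3 * s * t < 2 * Real.sqrt 3 := by
      have e3 : (3*s*t)^2 = 6*t^2 := by linear_combination 9*t^2*hs2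
      have hlt : (3*s*t)^2 < (2*Real.sqrt 3)^2 := by
        rw [e3]; nlinarith [h3sq, ht49]
      exact lt_of_pow_lt_pow_left₀ 2 (by positivity) hlt
    nlinarith [mul_le_mul_of_nonneg_right h1 ht0.le, hst]
  -- q(s) < 0
  have hqs : 27 * t * s ^ 2 - 4 * Real.sqrt 3 * s - 4 * t < 0 := by
    have e1 : 27*t*s^2 = 18*t := by linear_combination 27*t*hs2
    have e2 : 4*Real.sqrt 3*s = 4*Real.sqrt 2 := by linear_combination 4*h23
    rw [e1, e2]; linarith [ht7]
  -- sign of q left of c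
  have hq_pos : ∀ a ∈ Set.Icc (-s) s, a < c →
      0 < 27 * t * a ^ 2 - 4 * Real.sqrt 3 * a - 4 * t := by
    intro a ha hac
    have hprod : 0 < (c - a) * (4 * Real.sqrt 3 - 27 * t * (a + c)) := by
      apply mul_pos (by linarith)
      have : 27 * t * (a + c) < 0 := mul_neg_of_pos_of_neg h27 (by linarith)
      linarith
    nlinarith [hprod, hqc]
  -- sign of q right of c
  have hq_neg : ∀ a ∈ Set.Icc (-s) s, c < a →
      27 * t * a ^ 2 - 4 * Real.sqrt 3 * a - 4 * t < 0 := by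
    intro a ha hca
    have key : (s - c) * (27 * t * a ^ 2 - 4 * Real.sqrt 3 * a - 4 * t) =
        (s - a) * (27 * t * c ^ 2 - 4 * Real.sqrt 3 * c - 4 * t) +
        (a - c) * (27 * t * s ^ 2 - 4 * Real.sqrt 3 * s - 4 * t) -
        27 * t * (a - c) * (s - a) * (s - c) := by ring
    have h1 : (s - a) * (27 * t * c ^ 2 - 4 * Real.sqrt 3 * c - 4 * t) = 0 := by
      rw [hqc, mul_zero]
    have h2 : (a - c) * (27 * t * s ^ 2 - 4 * Real.sqrt 3 * s - 4 * t) < 0 :=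
      mul_neg_of_pos_of_neg (by linarith) hqs
    have h3 : 0 ≤ 27 * t * (a - c) * (s - a) * (s - c) := by
      have := ha.2
      apply mul_nonneg (mul_nonneg (mul_nonneg h27.le (by linarith)) (by linarith)) (by linarith)
    have hlt : (s - c) * (27 * t * a ^ 2 - 4 * Real.sqrt 3 * a - 4 * t) < 0 := by
      rw [key, h1]; linarith
    have hsc : 0 < s - c := by linarith
    by_contra h
    push_neg at h
    nlinarith [mul_nonneg hsc.le h, hlt]
  -- sign of f'
  have hf'_pos : ∀ a ∈ Set.Icc (-s) s, a < c → 0 < f' a := by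
    intro a ha hac
    rw [hf' a]
    have hb := hbpos a ha
    have hq := hq_pos a ha hac
    have h48 : (0:ℝ) < (1 / 48) * t ^ 2 := by positivity
    exact mul_pos (mul_pos h48 (pow_pos hb 3)) hq
  have hf'_neg : ∀ a ∈ Set.Icc (-s) s, c < a → f' a < 0 := by
    intro a ha hca
    rw [hf' a]
    have hb := hbpos a ha
    have hq := hq_neg a ha hca
    have h48 : (0:ℝ) < (1 / 48) * t ^ 2 := by positivity
    exact mul_neg_of_pos_of_neg (mul_pos h48 (pow_pos hb 3)) hq
  -- f s ≤ f (-s)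
  have hdiff : f (-s) - f s = (1/4) * (Real.sqrt 3 * s * t) ^ 3 * (4 - 6 * t ^ 2) := by
    rw [hf, hf]
    linear_combination ((4/3:ℝ)*Real.sqrt 3*s*t^3 - Real.sqrt 3*s^3*t^3 +
      (3/2:ℝ)*Real.sqrt 3*s^3*t^5 + (4/9:ℝ)*Real.sqrt 3^3*s*t) * h3sq +
      ((-6:ℝ)*Real.sqrt 3*s*t^3 - (45/4:ℝ)*Real.sqrt 3*s^3*t^5) * hs2
  have hfsle : f s ≤ f (-s) := by
    have hw : 0 < Real.sqrt 3 * s * t := by positivity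
    have h46 : 0 < 4 - 6 * t ^ 2 := by linarith [ht49]
    have hpos : 0 < (1/4) * (Real.sqrt 3 * s * t) ^ 3 * (4 - 6 * t ^ 2) := by
      apply mul_pos (mul_pos (by norm_num) (pow_pos hw 3)) h46
    linarith [hdiff, hpos]
  -- monotonicity
  have hdf : Differentiable ℝ f := fun a => (hderiv a).differentiableAt
  have hderiv_eq : deriv f = f' := funext fun a => (hderiv a).deriv
  have hmono : StrictMonoOn f (Set.Icc (-s) c) := by
    apply strictMonoOn_of_deriv_pos (convex_Icc _ _) hdf.continuous.continuousOn
    intro x hx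
    rw [interior_Icc] at hx
    rw [hderiv_eq]
    exact hf'_pos x ⟨hx.1.le, by linarith [hx.2]⟩ hx.2
  have hanti : StrictAntiOn f (Set.Icc c s) := by
    apply strictAntiOn_of_deriv_neg (convex_Icc _ _) hdf.continuous.continuousOn
    intro x hx
    rw [interior_Icc] at hx
    rw [hderiv_eq]
    exact hf'_neg x ⟨by linarith [hx.1], hx.2.le⟩ hx.1
  refine ⟨c, hc_mem, hf'_pos, hf'_neg, ?_, (min_eq_right hfsle).symm⟩
  intro a ha
  rcases le_or_gt a c with h | h
  · have hfa : f (-s) ≤ f a := by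
      rcases eq_or_lt_of_le ha.1 with h1 | h1
      · rw [← h1]
      · exact (hmono.monotoneOn ⟨le_rfl, hcs⟩ ⟨ha.1, h⟩ ha.1)
    linarith
  · exact hanti.antitoneOn ⟨h.le, ha.2⟩ ⟨by linarith, le_rfl⟩ ha.2
end

section
/- Fix reals A, B > 0 and c > 0 and t > 0 with A − t²β₁ > 0 and B − (3/4)t²βⱼ > 0 on the simplex D = {(β₁,β₂,β₃) : β₁ + β₂/2 + β₃/2 = c, βᵢ ≥ 0}. Then the function f(β₁,β₂,β₃) = (A − t²β₁)(B − (3/4)t²β₂)(B − (3/4)t²β₃) attains its minimum over D at a point where at least two of β₁, β₂, β₃ are zero. -/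
lemma quadmin (p q r s K x u v : ℝ) (hK : 0 ≤ K) (hqs : q * s ≤ 0)
    (h1 : u ≤ x) (h2 : x ≤ v) :
    min ((p + q*u)*(r + s*u)*K) ((p + q*v)*(r + s*v)*K) ≤ (p + q*x)*(r + s*x)*K := by
  rcases eq_or_lt_of_le (h1.trans h2) with h | huv
  · have : x = u := le_antisymm (h ▸ h2) h1
    subst this
    exact min_le_left _ _
  · have hxu : 0 ≤ x - u := by linarith
    have hvx : 0 ≤ v - x := by linarith
    have hint2 : 0 ≤ (-(q*s)) * K * ((x-u)*(v-x)) :=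
      mul_nonneg (mul_nonneg (by linarith) hK) (mul_nonneg hxu hvx)
    rcases le_total ((p + q*u)*(r + s*u)*K) ((p + q*v)*(r + s*v)*K) with h | h
    · rw [min_eq_left h]
      nlinarith [mul_nonneg hxu (sub_nonneg.2 h), hint2, huv]
    · rw [min_eq_right h]
      nlinarith [mul_nonneg hvx (sub_nonneg.2 h), hint2, huv]

theorem stmt_8 (A B c t : ℝ) (hA : 0 < A) (hB : 0 < B) (hc : 0 < c) (ht : 0 < t)
    (f : ℝ → ℝ → ℝ → ℝ)
    (hf : ∀ b1 b2 b3, f b1 b2 b3 =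
      (A - t ^ 2 * b1) * (B - (3 / 4) * t ^ 2 * b2) * (B - (3 / 4) * t ^ 2 * b3))
    (hpos : ∀ b1 b2 b3 : ℝ, 0 ≤ b1 → 0 ≤ b2 → 0 ≤ b3 → b1 + b2 / 2 + b3 / 2 = c →
      0 < A - t ^ 2 * b1 ∧ 0 < B - (3 / 4) * t ^ 2 * b2 ∧ 0 < B - (3 / 4) * t ^ 2 * b3) :
    ∃ b1 b2 b3 : ℝ, 0 ≤ b1 ∧ 0 ≤ b2 ∧ 0 ≤ b3 ∧ b1 + b2 / 2 + b3 / 2 = c ∧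
      ((b1 = 0 ∧ b2 = 0) ∨ (b1 = 0 ∧ b3 = 0) ∨ (b2 = 0 ∧ b3 = 0)) ∧
      ∀ b1' b2' b3' : ℝ, 0 ≤ b1' → 0 ≤ b2' → 0 ≤ b3' → b1' + b2' / 2 + b3' / 2 = c →
        f b1 b2 b3 ≤ f b1' b2' b3' := by
  set V1 := f c 0 0 with hV1
  set V2 := f 0 (2*c) 0 with hV2
  set V3 := f 0 0 (2*c) with hV3
  have ht2 : (0:ℝ) < t^2 := by positivity
  have hqs : (t^2/2) * (-(3/4*t^2)) ≤ 0 := by nlinarith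
  have hmain : ∀ b1' b2' b3' : ℝ, 0 ≤ b1' → 0 ≤ b2' → 0 ≤ b3' →
      b1' + b2' / 2 + b3' / 2 = c → min V1 (min V2 V3) ≤ f b1' b2' b3' := by
    intro b1 b2 b3 h1 h2 h3 hsum
    have hb3le : b3 ≤ 2*c := by linarith
    have hb2le : b2 ≤ 2*c - b3 := by linarith
    obtain ⟨P1, P2, P3⟩ := hpos b1 b2 b3 h1 h2 h3 hsum
    -- Step 1: along b2 (with b3 fixed, b1 determined), min at endpoints
    have s1 : min (f (c - b3/2) 0 b3) (f 0 (2*c - b3) b3) ≤ f b1 b2 b3 := by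
      have q := quadmin (A - t^2*c + t^2/2*b3) (t^2/2) B (-(3/4*t^2))
        (B - 3/4*t^2*b3) b2 0 (2*c - b3) (by linarith) hqs h2 hb2le
      have e1 : f (c - b3/2) 0 b3 =
          (A - t^2*c + t^2/2*b3 + t^2/2*0) * (B + -(3/4*t^2)*0) * (B - 3/4*t^2*b3) := by
        rw [hf]; ring
      have e2 : f 0 (2*c - b3) b3 =
          (A - t^2*c + t^2/2*b3 + t^2/2*(2*c-b3)) * (B + -(3/4*t^2)*(2*c-b3)) *
          (B - 3/4*t^2*b3) := by
        rw [hf]; ring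
      have e3 : f b1 b2 b3 =
          (A - t^2*c + t^2/2*b3 + t^2/2*b2) * (B + -(3/4*t^2)*b2) * (B - 3/4*t^2*b3) := by
        rw [hf, show b1 = c - b2/2 - b3/2 by linarith]; ring
      rw [e1, e2, e3]; exact q
    -- Step 2: the edge b2 = 0, along b3
    have s2 : min V1 V3 ≤ f (c - b3/2) 0 b3 := by
      have q := quadmin (A - t^2*c) (t^2/2) B (-(3/4*t^2)) B b3 0 (2*c)
        hB.le hqs h3 hb3le
      have e1 : V1 = (A - t^2*c + t^2/2*0) * (B + -(3/4*t^2)*0) * B := by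
        rw [hV1, hf]; ring
      have e2 : V3 = (A - t^2*c + t^2/2*(2*c)) * (B + -(3/4*t^2)*(2*c)) * B := by
        rw [hV3, hf]; ring
      have e3 : f (c - b3/2) 0 b3 =
          (A - t^2*c + t^2/2*b3) * (B + -(3/4*t^2)*b3) * B := by
        rw [hf]; ring
      rw [e1, e2, e3]; exact q
    -- Step 3: the edge b1 = 0, along b3
    have s3 : min V2 V3 ≤ f 0 (2*c - b3) b3 := by
      have hqs' : (3/4*t^2) * (-(3/4*t^2)) ≤ 0 := by nlinarith
      have q := quadmin (B - 3/2*t^2*c) (3/4*t^2) B (-(3/4*t^2)) A b3 0 (2*c)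
        hA.le hqs' h3 hb3le
      have e1 : V2 = (B - 3/2*t^2*c + 3/4*t^2*0) * (B + -(3/4*t^2)*0) * A := by
        rw [hV2, hf]; ring
      have e2 : V3 = (B - 3/2*t^2*c + 3/4*t^2*(2*c)) * (B + -(3/4*t^2)*(2*c)) * A := by
        rw [hV3, hf]; ring
      have e3 : f 0 (2*c - b3) b3 =
          (B - 3/2*t^2*c + 3/4*t^2*b3) * (B + -(3/4*t^2)*b3) * A := by
        rw [hf]; ring
      rw [e1, e2, e3]; exact q
    refine le_trans (le_min ?_ ?_) s1
    · exact le_trans (min_le_min_left V1 (min_le_right V2 V3)) s2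
    · exact le_trans (min_le_right V1 (min V2 V3)) s3
  rcases le_total V1 V2 with h12 | h12
  · rcases le_total V1 V3 with h13 | h13
    · refine ⟨c, 0, 0, hc.le, le_refl 0, le_refl 0, by ring, Or.inr (Or.inr ⟨rfl, rfl⟩),
        fun b1 b2 b3 h1 h2 h3 hs => le_trans ?_ (hmain b1 b2 b3 h1 h2 h3 hs)⟩
      exact le_min (le_refl _) (le_min h12 h13)
    · refine ⟨0, 0, 2*c, le_refl 0, le_refl 0, by positivity, by ring,
        Or.inl ⟨rfl, rfl⟩,
        fun b1 b2 b3 h1 h2 h3 hs => le_trans ?_ (hmain b1 b2 b3 h1 h2 h3 hs)⟩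
      exact le_min h13 (le_min (h13.trans h12) le_rfl)
  · rcases le_total V2 V3 with h23 | h23
    · refine ⟨0, 2*c, 0, le_refl 0, by positivity, le_refl 0, by ring,
        Or.inr (Or.inl ⟨rfl, rfl⟩),
        fun b1 b2 b3 h1 h2 h3 hs => le_trans ?_ (hmain b1 b2 b3 h1 h2 h3 hs)⟩
      exact le_min h12 (le_min le_rfl h23)
    · refine ⟨0, 0, 2*c, le_refl 0, le_refl 0, by positivity, by ring,
        Or.inl ⟨rfl, rfl⟩,
        fun b1 b2 b3 h1 h2 h3 hs => le_trans ?_ (hmain b1 b2 b3 h1 h2 h3 hs)⟩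
      exact le_min (h23.trans h12) (le_min h23 le_rfl)
end

section
/- For 0 < t < 1/√5, the function f(b₁) = (1 − √3 b₁ t)²(1 + (√3/2) b₁ t)²(1 + √3 b₁ t + 3b₁² t² − (3/2)t²) on the interval b₁² ≤ 2/3 attains its minimum at b₁ = √(2/3), and this minimum value equals E(t) = (1 − √2 t)²(1 + t/√2)^4. -/
lemma core_ineq (s c : ℝ) (h1 : 0 < c) (h2 : c^2 < 2/5) (h3 : -c ≤ s) (h4 : s ≤ c) :
    0 ≤ 3/4*c + 1/2*c^2 - 9/16*c^3 - 3/8*c^4 - 1/16*c^5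
      + s*(3/4 + 5/4*c - 9/16*c^2 - 3/8*c^3 - 1/16*c^4)
      + s^2*(5/4 - 3/8*c^2 - 1/16*c^3) + s^3*(-3/4*c - 1/16*c^2)
      + s^4*(-3/4 - 1/4*c) - 1/4*s^5 := by
  have hu : 0 ≤ c + s := by linarith
  have hv : 0 ≤ c - s := by linarith
  have hw : 0 ≤ 2/5 - c^2 := by linarith
  nlinarith [mul_nonneg hu hv, mul_nonneg (mul_nonneg hu hv) hw,
    mul_nonneg (mul_nonneg hu hu) hv, mul_nonneg (mul_nonneg hu hv) hv,
    mul_nonneg (mul_nonneg hu hw) h1.le, mul_nonneg (mul_nonneg hv hw) h1.le,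
    mul_nonneg hu hw, mul_nonneg hv hw, mul_nonneg hu h1.le, mul_nonneg hv h1.le,
    mul_nonneg (mul_nonneg (mul_nonneg hu hv) hw) h1.le,
    mul_nonneg (mul_nonneg (mul_nonneg hu hu) hv) hw,
    mul_nonneg (mul_nonneg (mul_nonneg hu hv) hv) hw,
    sq_nonneg (c+s), sq_nonneg (c-s), sq_nonneg s, sq_nonneg c]

lemma g_min (s c : ℝ) (h1 : 0 < c) (h2 : c^2 < 2/5) (h3 : -c ≤ s) (h4 : s ≤ c) :
    (1-c)^2*(1+c/2)^2*(1+c+c^2 - (3/4)*c^2) ≤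
      (1-s)^2*(1+s/2)^2*(1+s+s^2 - (3/4)*c^2) := by
  have hQ := core_ineq s c h1 h2 h3 h4
  have hv : 0 ≤ c - s := by linarith
  nlinarith [mul_nonneg hv hQ]

theorem stmt_9 (t : ℝ) (ht0 : 0 < t) (ht1 : t < 1 / Real.sqrt 5)
    (f : ℝ → ℝ)
    (hf : ∀ b, f b = (1 - Real.sqrt 3 * b * t) ^ 2 * (1 + (Real.sqrt 3 / 2) * b * t) ^ 2 *
      (1 + Real.sqrt 3 * b * t + 3 * b ^ 2 * t ^ 2 - (3 / 2) * t ^ 2)) :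
    (∀ b ∈ Set.Icc (-Real.sqrt (2 / 3)) (Real.sqrt (2 / 3)),
        f (Real.sqrt (2 / 3)) ≤ f b) ∧
      f (Real.sqrt (2 / 3)) = (1 - Real.sqrt 2 * t) ^ 2 * (1 + t / Real.sqrt 2) ^ 4 := by
  have h2 : Real.sqrt 2 ^ 2 = 2 := Real.sq_sqrt (by norm_num)
  have h3 : Real.sqrt 3 ^ 2 = 3 := Real.sq_sqrt (by norm_num)
  have h5 : Real.sqrt 5 ^ 2 = 5 := Real.sq_sqrt (by norm_num)
  have h2pos : (0:ℝ) < Real.sqrt 2 := Real.sqrt_pos.2 (by norm_num)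
  have h3pos : (0:ℝ) < Real.sqrt 3 := Real.sqrt_pos.2 (by norm_num)
  have h5pos : (0:ℝ) < Real.sqrt 5 := Real.sqrt_pos.2 (by norm_num)
  set r : ℝ := Real.sqrt (2/3) with hr
  have hr2 : r ^ 2 = 2/3 := Real.sq_sqrt (by norm_num)
  have hrpos : 0 < r := Real.sqrt_pos.2 (by norm_num)
  have hsr : Real.sqrt 3 * r = Real.sqrt 2 := by
    rw [hr, ← Real.sqrt_mul (by norm_num : (3:ℝ) ≥ 0)]
    norm_num
  set c : ℝ := Real.sqrt 2 * t with hc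
  have hcpos : 0 < c := mul_pos h2pos ht0
  have hc2 : c ^ 2 = 2 * t ^ 2 := by rw [hc, mul_pow, h2]
  have ht2 : t ^ 2 < 1/5 := by
    have h' : t * Real.sqrt 5 < 1 := by
      have h'' := mul_lt_mul_of_pos_right ht1 h5pos
      rwa [one_div, inv_mul_cancel₀ (ne_of_gt h5pos)] at h''
    nlinarith [mul_pos ht0 h5pos]
  have hc2' : c ^ 2 < 2/5 := by rw [hc2]; linarith
  -- rewrite f b in terms of s = √3 b t
  have hfb : ∀ b : ℝ, f b = (1 - Real.sqrt 3 * b * t) ^ 2 * (1 + (Real.sqrt 3 * b * t)/2) ^ 2 *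
      (1 + Real.sqrt 3 * b * t + (Real.sqrt 3 * b * t) ^ 2 - (3/4) * c ^ 2) := by
    intro b
    rw [hf b, hc2]
    have : (Real.sqrt 3 * b * t) ^ 2 = 3 * b ^ 2 * t ^ 2 := by
      rw [mul_pow, mul_pow, h3]
    rw [this]; ring_nf
  have hfr : Real.sqrt 3 * r * t = c := by rw [hsr]
  constructor
  · intro b hb
    obtain ⟨hb1, hb2⟩ := hb
    set s : ℝ := Real.sqrt 3 * b * t with hs
    have hst : s ≤ c := by
      rw [hs, hc, ← hsr]
      have : Real.sqrt 3 * b ≤ Real.sqrt 3 * r := by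
        exact mul_le_mul_of_nonneg_left hb2 h3pos.le
      exact mul_le_mul_of_nonneg_right this ht0.le
    have hst' : -c ≤ s := by
      rw [hs, hc, ← hsr]
      have : Real.sqrt 3 * (-r) ≤ Real.sqrt 3 * b := by
        exact mul_le_mul_of_nonneg_left hb1 h3pos.le
      have := mul_le_mul_of_nonneg_right this ht0.le
      calc -(Real.sqrt 3 * r * t) = Real.sqrt 3 * (-r) * t := by ring
        _ ≤ Real.sqrt 3 * b * t := this
    rw [hfb b, hfb r, hfr]
    exact g_min s c hcpos hc2' hst' hst
  · rw [hfb r, hfr]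
    have htd : t / Real.sqrt 2 = c / 2 := by
      rw [hc]
      rw [div_eq_iff (ne_of_gt h2pos)]
      nlinarith
    rw [htd, hc]
    ring_nf
end

section
/- For √2/4 < t < 1/√5 and x₀ = −1/(2√3 t), the difference f(x₀) − f(√(2/3)) = (√2 − 2t)(√2 + 4t)²(−13√2 + 78t + 48√2 t² + 16t³)/1024 is strictly positive, where f(b₁) = (1 − √3 b₁ t)²(1 + (√3/2)b₁ t)²(1 + √3 b₁ t + 3b₁²t² − (3/2)t²). -/
/-!
Both values of `f` depend on the point `b` only through `u = √3 b t`: the point `x₀` gives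
`u = -1/2` and `√(2/3)` gives `u = √2 t`. The difference is then a polynomial identity in `t`
and `√2`, and on `√2/4 < t < √2/2` each of its three factors is positive.
-/

open Real

noncomputable def cubicProfile (t u : ℝ) : ℝ :=
  (1 - u) ^ 2 * (1 + u / 2) ^ 2 * (1 + u + u ^ 2 - (3 / 2) * t ^ 2)

lemma cubicProfile_sqrt_three_mul (t b : ℝ) :
    (1 - √3 * b * t) ^ 2 * (1 + (√3 / 2) * b * t) ^ 2 *
        (1 + √3 * b * t + 3 * b ^ 2 * t ^ 2 - (3 / 2) * t ^ 2)
      = cubicProfile t (√3 * b * t) := by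
  have h3 : √3 ^ 2 = 3 := sq_sqrt (by norm_num)
  unfold cubicProfile
  linear_combination (1 - √3 * b * t) ^ 2 * (1 + (√3 / 2) * b * t) ^ 2 * b ^ 2 * t ^ 2 * h3.symm

lemma sqrt_three_mul_neg_inv_mul {t : ℝ} (ht : t ≠ 0) :
    √3 * -(1 / (2 * √3 * t)) * t = -1 / 2 := by
  have h3 : √3 ≠ 0 := by positivity
  field_simp

lemma sqrt_three_mul_sqrt_two_thirds : √3 * √(2 / 3) = √2 := by
  rw [← sqrt_mul (by norm_num)]
  norm_num

lemma cubicProfile_sub_cubicProfile {c : ℝ} (hc : c ^ 2 = 2) (t : ℝ) :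
    cubicProfile t (-1 / 2) - cubicProfile t (c * t)
      = (c - 2 * t) * (c + 4 * t) ^ 2 * (-13 * c + 78 * t + 48 * c * t ^ 2 + 16 * t ^ 3) / 1024 := by
  unfold cubicProfile
  linear_combination ((13/1024 - 3/64 * t^2 - 1/8 * t^6) * c^2 + (-3/4 * t^5) * c^3
    + (-1/4 * t^6) * c^4 + (61/64 * t^3 - 3/4 * t^5) * c + 13/512 + 51/256 * t^2
    - 39/32 * t^4 - 1/4 * t^6) * hc

lemma two_mul_lt_sqrt_two_of_lt_inv_sqrt_five {t : ℝ} (ht : t < 1 / √5) : 2 * t < √2 := by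
  rcases le_or_gt t 0 with ht0 | ht0
  · linarith [sqrt_pos.2 (two_pos : (0 : ℝ) < 2)]
  have ht5 : t ^ 2 < 1 / 5 := by
    rwa [← sqrt_one, ← sqrt_div' _ (by norm_num : (0 : ℝ) ≤ 5), lt_sqrt ht0.le] at ht
  rw [lt_sqrt (by positivity)]
  nlinarith

lemma factored_difference_pos {c t : ℝ} (hc : 0 < c) (hct : c / 4 < t) (htc : 2 * t < c) :
    0 < (c - 2 * t) * (c + 4 * t) ^ 2 * (-13 * c + 78 * t + 48 * c * t ^ 2 + 16 * t ^ 3) / 1024 := by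
  have ht : 0 < t := by linarith
  have hcubic : 0 < -13 * c + 78 * t + 48 * c * t ^ 2 + 16 * t ^ 3 := by
    nlinarith [mul_pos hc (pow_pos ht 2), pow_pos ht 3]
  have hc2t : 0 < c - 2 * t := by linarith
  positivity

theorem stmt_10 (t : ℝ) (ht0 : Real.sqrt 2 / 4 < t) (ht1 : t < 1 / Real.sqrt 5)
    (f : ℝ → ℝ)
    (hf : ∀ b, f b = (1 - Real.sqrt 3 * b * t) ^ 2 * (1 + (Real.sqrt 3 / 2) * b * t) ^ 2 *
      (1 + Real.sqrt 3 * b * t + 3 * b ^ 2 * t ^ 2 - (3 / 2) * t ^ 2)) :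
    f (-(1 / (2 * Real.sqrt 3 * t))) - f (Real.sqrt (2 / 3))
        = (Real.sqrt 2 - 2 * t) * (Real.sqrt 2 + 4 * t) ^ 2 *
          (-13 * Real.sqrt 2 + 78 * t + 48 * Real.sqrt 2 * t ^ 2 + 16 * t ^ 3) / 1024 ∧
      0 < f (-(1 / (2 * Real.sqrt 3 * t))) - f (Real.sqrt (2 / 3)) := by
  have ht : t ≠ 0 := (lt_trans (by positivity) ht0).ne'
  have hdiff : f (-(1 / (2 * √3 * t))) - f (√(2 / 3))
      = (√2 - 2 * t) * (√2 + 4 * t) ^ 2 *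
          (-13 * √2 + 78 * t + 48 * √2 * t ^ 2 + 16 * t ^ 3) / 1024 := by
    rw [hf, hf, cubicProfile_sqrt_three_mul, cubicProfile_sqrt_three_mul,
      sqrt_three_mul_neg_inv_mul ht, sqrt_three_mul_sqrt_two_thirds]
    exact cubicProfile_sub_cubicProfile (sq_sqrt (by norm_num)) t
  refine ⟨hdiff, hdiff ▸ factored_difference_pos (by positivity) ht0 ?_⟩
  exact two_mul_lt_sqrt_two_of_lt_inv_sqrt_five ht1
end

section
/- Let t ∈ (0, 1/√5). Define det(a,b,c) = (1 − √2 a t − (√3/2) b t)(1 − √2 a t + (√3/4) b t)²(1 + √2 a t − (√3/2) c t)(1 + √2 a t + (√3/4) c t)² on the set {(a,b,c) : 8a² + 3b² + 3c² = 4, b ≥ 0, c ≥ 0}. Then the minimum of det over this set is (1 − t)³(1 + t)³ = G(t), attained at (a,b,c) = (1/√2, 0, 0). -/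
set_option maxHeartbeats 1000000

lemma quartic_aux (s : ℝ) (h : s^2 ≤ 1/5) :
    0 ≤ (3/4)*(1-s)*(1+s)^2*(3-5*s) - (1/8)*(1+s)^3 - 3*(1-s^2)*(1/5-s^2) := by
  nlinarith [sq_nonneg (s+1), sq_nonneg (2*s+1), sq_nonneg s, sq_nonneg (s-1),
    mul_nonneg (by linarith : (0:ℝ) ≤ 1/5 - s^2) (sq_nonneg (s+1)),
    mul_nonneg (by linarith : (0:ℝ) ≤ 1/5 - s^2) (sq_nonneg (s-1)),
    mul_nonneg (by linarith : (0:ℝ) ≤ 1/5 - s^2) (sq_nonneg (2*s+1)),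
    sq_nonneg (s^2+s), sq_nonneg (s^2-s), sq_nonneg (s^2+s-1/2)]

lemma key_s13 (s p q : ℝ) (hp : 0 ≤ p) (hq : 0 ≤ q) (h : s^2+p^2+q^2 ≤ 1/5) :
    (1 - s^2 - p^2 - q^2)^3 ≤ (1-s-p)*(1-s+p/2)^2*(1+s-q)*(1+s+q/2)^2 := by
  have hs2 : s^2 ≤ 1/5 := by nlinarith [sq_nonneg p, sq_nonneg q]
  have hp2 : p^2 ≤ 1/5 := by nlinarith [sq_nonneg s, sq_nonneg q]
  have hq2 : q^2 ≤ 1/5 := by nlinarith [sq_nonneg s, sq_nonneg p]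
  have hp12 : p ≤ 1/2 := by nlinarith
  have hq12 : q ≤ 1/2 := by nlinarith
  have hs1 : s < 1 := by nlinarith
  have hs1' : -1 < s := by nlinarith
  have hU : (0:ℝ) ≤ 1 - s := by linarith
  have hV : (0:ℝ) ≤ 1 + s := by linarith
  have hw : (0:ℝ) ≤ 1 - s^2 := by nlinarith
  have hgp := quartic_aux s hs2
  have hgq' := quartic_aux (-s) (by nlinarith)
  have hgq : 0 ≤ (3/4)*(1-s)^2*(1+s)*(3+5*s) - (1/8)*(1-s)^3 - 3*(1-s^2)*(1/5-s^2) := by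
    nlinarith [hgq']
  have hV3 : (0:ℝ) ≤ (1+s)^3 := by positivity
  have hU3 : (0:ℝ) ≤ (1-s)^3 := by
    have h' : (0:ℝ) ≤ (1-s) := hU
    positivity
  have hCp : 0 ≤ (3/4)*(1-s)*(1+s)^2*(3-5*s) - (p/4)*(1+s)^3 - 3*(1-s^2)*(p^2+q^2) := by
    have h1 : (p/4)*(1+s)^3 ≤ (1/8)*(1+s)^3 := by nlinarith
    have h2 : 3*(1-s^2)*(p^2+q^2) ≤ 3*(1-s^2)*(1/5-s^2) := by nlinarith
    linarith
  have hCq : 0 ≤ (3/4)*(1-s)^2*(1+s)*(3+5*s) - (q/4)*(1-s)^3 - 3*(1-s^2)*(p^2+q^2) := by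
    have h1 : (q/4)*(1-s)^3 ≤ (1/8)*(1-s)^3 := by nlinarith
    have h2 : 3*(1-s^2)*(p^2+q^2) ≤ 3*(1-s^2)*(1/5-s^2) := by nlinarith
    linarith
  nlinarith [mul_nonneg (sq_nonneg p) hCp, mul_nonneg (sq_nonneg q) hCq,
    pow_nonneg (by positivity : (0:ℝ) ≤ p^2+q^2) 3,
    mul_nonneg (mul_nonneg (sq_nonneg p) (sq_nonneg q)) hw,
    mul_nonneg (mul_nonneg (sq_nonneg p) (mul_nonneg hq (sq_nonneg q))) hU,
    mul_nonneg (mul_nonneg (mul_nonneg hp (sq_nonneg p)) (sq_nonneg q)) hV,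
    mul_nonneg (mul_nonneg hp (sq_nonneg p)) (mul_nonneg hq (sq_nonneg q))]

theorem stmt_13 (t : ℝ) (ht0 : 0 < t) (ht1 : t < 1 / Real.sqrt 5)
    (det : ℝ → ℝ → ℝ → ℝ)
    (hdet : ∀ a b c, det a b c =
      (1 - Real.sqrt 2 * a * t - (Real.sqrt 3 / 2) * b * t) *
        (1 - Real.sqrt 2 * a * t + (Real.sqrt 3 / 4) * b * t) ^ 2 *
        (1 + Real.sqrt 2 * a * t - (Real.sqrt 3 / 2) * c * t) *
        (1 + Real.sqrt 2 * a * t + (Real.sqrt 3 / 4) * c * t) ^ 2) :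
    (∀ a b c : ℝ, 8 * a ^ 2 + 3 * b ^ 2 + 3 * c ^ 2 = 4 → 0 ≤ b → 0 ≤ c →
        (1 - t) ^ 3 * (1 + t) ^ 3 ≤ det a b c) ∧
      det (1 / Real.sqrt 2) 0 0 = (1 - t) ^ 3 * (1 + t) ^ 3 := by
  have h2 : Real.sqrt 2 ^ 2 = 2 := Real.sq_sqrt (by norm_num)
  have h3 : Real.sqrt 3 ^ 2 = 3 := Real.sq_sqrt (by norm_num)
  have h5 : Real.sqrt 5 ^ 2 = 5 := Real.sq_sqrt (by norm_num)
  have h5pos : 0 < Real.sqrt 5 := Real.sqrt_pos.mpr (by norm_num)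
  have hT : t ^ 2 ≤ 1 / 5 := by
    have h1 : t ^ 2 < (1 / Real.sqrt 5) ^ 2 := by
      apply pow_lt_pow_left₀ ht1 (le_of_lt ht0)
      norm_num
    have h2' : (1 / Real.sqrt 5) ^ 2 = 1 / 5 := by
      rw [div_pow, h5, one_pow]
    linarith [h1, h2'.le]
  constructor
  · intro a b c hcon hb hc
    set s := Real.sqrt 2 * a * t with hs_def
    set p := Real.sqrt 3 / 2 * b * t with hp_def
    set q := Real.sqrt 3 / 2 * c * t with hq_def
    have hp0 : 0 ≤ p := by
      rw [hp_def]
      have := Real.sqrt_nonneg 3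
      positivity
    have hq0 : 0 ≤ q := by
      rw [hq_def]
      have := Real.sqrt_nonneg 3
      positivity
    have hsum : s ^ 2 + p ^ 2 + q ^ 2 = t ^ 2 := by
      rw [hs_def, hp_def, hq_def]
      have e1 : (Real.sqrt 2 * a * t) ^ 2 = 2 * a ^ 2 * t ^ 2 := by
        rw [mul_pow, mul_pow, h2]
      have e2 : (Real.sqrt 3 / 2 * b * t) ^ 2 = 3 / 4 * b ^ 2 * t ^ 2 := by
        rw [mul_pow, mul_pow, div_pow, h3]; ring
      have e3 : (Real.sqrt 3 / 2 * c * t) ^ 2 = 3 / 4 * c ^ 2 * t ^ 2 := by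
        rw [mul_pow, mul_pow, div_pow, h3]; ring
      rw [e1, e2, e3]
      nlinarith [hcon]
    have hkey := key_s13 s p q hp0 hq0 (by rw [hsum]; exact hT)
    have e1 : (1:ℝ) - s ^ 2 - p ^ 2 - q ^ 2 = 1 - t ^ 2 := by rw [← hsum]; ring
    rw [hdet]
    calc (1 - t) ^ 3 * (1 + t) ^ 3 = (1 - s ^ 2 - p ^ 2 - q ^ 2) ^ 3 := by
          rw [e1]; ring
      _ ≤ (1-s-p)*(1-s+p/2)^2*(1+s-q)*(1+s+q/2)^2 := hkey
      _ = (1 - Real.sqrt 2 * a * t - (Real.sqrt 3 / 2) * b * t) *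
        (1 - Real.sqrt 2 * a * t + (Real.sqrt 3 / 4) * b * t) ^ 2 *
        (1 + Real.sqrt 2 * a * t - (Real.sqrt 3 / 2) * c * t) *
        (1 + Real.sqrt 2 * a * t + (Real.sqrt 3 / 4) * c * t) ^ 2 := by
          rw [hs_def, hp_def, hq_def]; ring
  · have hne : Real.sqrt 2 ≠ 0 := by positivity
    have hone : Real.sqrt 2 * (1 / Real.sqrt 2) = 1 := by field_simp
    rw [hdet, hone]
    ring
end

section
/- Suppose 0 ≤ α² ≤ 3 and 0 < t ≤ (1/α)√(3/2) (with the convention that the bound is vacuous if α = 0). Then F(α, t, 3) := (1 − αt√(2/3))·(1 + αt/√6)² satisfies F(α,t,3) ≥ F(√3, t, 3) = (1 − √2 t)(1 + t/√2)², i.e. F(·, t, 3) is decreasing in α on [0, √3] for fixed admissible t. -/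
/-!
With `u = α t / √6` one has `α t √(2/3) = 2u`, so `F(α, t, 3) = (1 - 2u)(1 + u)²`. The polynomial
`(1 - n u)(1 + u)ⁿ` has derivative `-n(n+1) u (1 + u)ⁿ⁻¹ ≤ 0` for `u ≥ 0`, hence is antitone there,
and `α ≤ √3` means `u ≤ t / √2`, the value of `u` at `α = √3`.
-/

open Real Set

theorem antitoneOn_one_sub_mul_mul_one_add_pow (n : ℕ) :
    AntitoneOn (fun u : ℝ => (1 - n * u) * (1 + u) ^ n) (Ici 0) := by
  have hderiv (u : ℝ) : HasDerivAt (fun u : ℝ => (1 - n * u) * (1 + u) ^ n)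
      (-(n * (n + 1) * u * (1 + u) ^ (n - 1))) u := by
    have h : HasDerivAt (fun u : ℝ => (1 - n * u) * (1 + u) ^ n)
        (-(n * 1) * (1 + u) ^ n + (1 - n * u) * (n * (1 + u) ^ (n - 1) * 1)) u :=
      (((hasDerivAt_id' u).const_mul (n : ℝ)).const_sub 1).mul
        (((hasDerivAt_id' u).const_add 1).pow n)
    convert h using 1
    rcases n with _ | n
    · simp
    · rw [Nat.add_sub_cancel, pow_succ]
      push_cast
      ring
  refine antitoneOn_of_deriv_nonpos (convex_Ici 0) ?_ ?_ ?_
  · fun_prop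
  · exact fun u _ => (hderiv u).differentiableAt.differentiableWithinAt
  · intro u hu
    rw [interior_Ici, mem_Ioi] at hu
    rw [(hderiv u).deriv, neg_nonpos]
    positivity

theorem mul_sqrt_two_div_three (x : ℝ) : x * √(2 / 3) = 2 * (x / √6) := by
  have h6 : √6 = √(2 / 3) * 3 := by
    rw [show (6 : ℝ) = 2 / 3 * 3 ^ 2 by norm_num, sqrt_mul (by norm_num), sqrt_sq (by norm_num)]
  have h : √(2 / 3) ^ 2 = 2 / 3 := sq_sqrt (by norm_num)
  rw [h6]
  field_simp
  rw [h]; ring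

theorem sqrt_three_mul_div_sqrt_six (t : ℝ) : √3 * t / √6 = t / √2 := by
  rw [show (6 : ℝ) = 2 * 3 by norm_num, sqrt_mul (by norm_num)]
  have : 0 < √3 := by positivity
  field_simp

theorem sqrt_two_mul_eq_two_mul_div (t : ℝ) : √2 * t = 2 * (t / √2) := by
  have : 0 < √2 := by positivity
  field_simp
  rw [sq_sqrt zero_le_two, mul_comm]

theorem stmt_19_general (α t : ℝ) (hα0 : 0 ≤ α) (hα3 : α ≤ Real.sqrt 3) (ht : 0 < t) :
    (1 - Real.sqrt 2 * t) * (1 + t / Real.sqrt 2) ^ 2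
      ≤ (1 - α * t * Real.sqrt (2 / 3)) * (1 + α * t / Real.sqrt 6) ^ 2 ∧
    (1 - Real.sqrt 3 * t * Real.sqrt (2 / 3)) * (1 + Real.sqrt 3 * t / Real.sqrt 6) ^ 2
      = (1 - Real.sqrt 2 * t) * (1 + t / Real.sqrt 2) ^ 2 := by
  have hle : α * t / √6 ≤ t / √2 := sqrt_three_mul_div_sqrt_six t ▸
    div_le_div_of_nonneg_right (mul_le_mul_of_nonneg_right hα3 ht.le) (sqrt_nonneg 6)
  rw [mul_sqrt_two_div_three, mul_sqrt_two_div_three, sqrt_three_mul_div_sqrt_six,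
    sqrt_two_mul_eq_two_mul_div]
  refine ⟨?_, rfl⟩
  exact_mod_cast antitoneOn_one_sub_mul_mul_one_add_pow 2 (mem_Ici.2 (by positivity))
    (mem_Ici.2 (by positivity)) hle

theorem stmt_19 (α t : ℝ) (hα0 : 0 ≤ α) (hα3 : α ≤ Real.sqrt 3) (ht : 0 < t)
    (hadm : α * t ≤ Real.sqrt (3 / 2)) :
    (1 - Real.sqrt 2 * t) * (1 + t / Real.sqrt 2) ^ 2
      ≤ (1 - α * t * Real.sqrt (2 / 3)) * (1 + α * t / Real.sqrt 6) ^ 2 ∧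
    (1 - Real.sqrt 3 * t * Real.sqrt (2 / 3)) * (1 + Real.sqrt 3 * t / Real.sqrt 6) ^ 2
      = (1 - Real.sqrt 2 * t) * (1 + t / Real.sqrt 2) ^ 2 :=
  stmt_19_general α t hα0 hα3 ht
end
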